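/- arXiv:1401.4002 — 3 statements merged into one kernel-verified Lean document; each statement's English description precedes it below -/
import Mathlib

section
/- If the Hilbert system GL proves Γ^♯ for a sequent Γ, then Γ is derivable in the sequent calculus GL_Seq. -/
/-!
Completeness goes through Kripke semantics. GL is sound for transitive, conversely
well-founded models (Löb's axiom is induction along the converse of the accessibility
relation), so if `GLH ⊢ Γ^♯` then no such model refutes `Γ` at a world. Conversely, backward
proof search in GL_Seq either finds a derivation of `Γ` or a countermodel: once no
propositional rule applies, a root placed below countermodels of the premises of all
applicable □_GL-rules refutes `Γ`. Search stays inside the finite closure of `Γ` under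
subformulas and negation, and each □_GL-step adds a new diamond formula of that closure,
which bounds the search.
-/

/-- Modal formulas in negation normal form. -/
inductive Fml : Type where
  | pos : ℕ → Fml
  | neg : ℕ → Fml
  | top : Fml
  | bot : Fml
  | and : Fml → Fml → Fml
  | or : Fml → Fml → Fml
  | box : Fml → Fml
  | dia : Fml → Fml
  deriving DecidableEq

/-- De Morgan negation. -/
def Fml.negation : Fml → Fml
  | .pos n => .neg n
  | .neg n => .pos n
  | .top => .bot
  | .bot => .top
  | .and A B => .or A.negation B.negation
  | .or A B => .and A.negation B.negation
  | .box A => .dia A.negation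
  | .dia A => .box A.negation

def Fml.imp (A B : Fml) : Fml := .or A.negation B
def Fml.biimp (A B : Fml) : Fml := .and (A.imp B) (B.imp A)
def Fml.boxdot (A : Fml) : Fml := .and A (.box A)

/-- Boolean evaluation, with modal subformulas evaluated via `m` (diamonds dually). -/
def Fml.eval (v : ℕ → Bool) (m : Fml → Bool) : Fml → Bool
  | .pos n => v n
  | .neg n => !(v n)
  | .top => true
  | .bot => false
  | .and A B => A.eval v m && B.eval v m
  | .or A B => A.eval v m || B.eval v m
  | .box A => m A
  | .dia A => !(m A.negation)

/-- Boolean tautologies. -/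
def Fml.Taut (A : Fml) : Prop := ∀ v m, A.eval v m = true

/-- The Hilbert system for Gödel–Löb logic GLH. -/
inductive GLH : Fml → Prop where
  | taut (A) : A.Taut → GLH A
  | distr (A B) : GLH ((Fml.box (A.imp B)).imp ((Fml.box A).imp (Fml.box B)))
  | lob (A) : GLH ((Fml.box ((Fml.box A).imp A)).imp (Fml.box A))
  | mp (A B) : GLH (A.imp B) → GLH A → GLH B
  | nec (A) : GLH A → GLH (Fml.box A)

/-- One-sided sequents: finite multisets of formulas. -/
abbrev Sequent := Multiset Fml

/-- Prefix every formula of a sequent with ◇. -/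
def diaS (Γ : Sequent) : Sequent := Γ.map Fml.dia

def listSharp : List Fml → Fml
  | [] => .bot
  | [A] => A
  | A :: l => .or A (listSharp l)

/-- Γ^♯ : the disjunction of the formulas of Γ (⊥ if Γ is empty). -/
noncomputable def sharp (Γ : Sequent) : Fml := listSharp Γ.toList

def listConj : List Fml → Fml
  | [] => .top
  | [A] => A
  | A :: l => .and A (listConj l)

/-- The sequent calculus GL_Seq. -/
inductive GLSeq : Sequent → Prop where
  | axA (Γ A) : GLSeq (A ::ₘ A.negation ::ₘ Γ)
  | axTop (Γ) : GLSeq (Fml.top ::ₘ Γ)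
  | andR {Γ A B} : GLSeq (A ::ₘ Γ) → GLSeq (B ::ₘ Γ) → GLSeq (Fml.and A B ::ₘ Γ)
  | orR {Γ A B} : GLSeq (A ::ₘ B ::ₘ Γ) → GLSeq (Fml.or A B ::ₘ Γ)
  | boxGL {Γ Δ A} : GLSeq (A ::ₘ Fml.dia A.negation ::ₘ (Γ + diaS Γ)) →
      GLSeq (Fml.box A ::ₘ (diaS Γ + Δ))

/-- One backward step of the K4-style rules: Γ is an initial sequent or the conclusion of
a rule all of whose premises lie in `S`. -/
def InfStep (S : Set Sequent) (Γ : Sequent) : Prop :=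
  (∃ Δ A, Γ = A ::ₘ Fml.negation A ::ₘ Δ) ∨
  (∃ Δ, Γ = Fml.top ::ₘ Δ) ∨
  (∃ Δ A B, Γ = Fml.and A B ::ₘ Δ ∧ (A ::ₘ Δ) ∈ S ∧ (B ::ₘ Δ) ∈ S) ∨
  (∃ Δ A B, Γ = Fml.or A B ::ₘ Δ ∧ (A ::ₘ B ::ₘ Δ) ∈ S) ∨
  (∃ Δ Θ A, Γ = Fml.box A ::ₘ (diaS Δ + Θ) ∧ (A ::ₘ (Δ + diaS Δ)) ∈ S)

/-- GL_∞ : Γ has a (possibly non-well-founded) proof in the K4-style system, coinductively: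
Γ belongs to some set of sequents each of which is an initial sequent or the conclusion
of a rule with premises in the set. -/
def GLInf (Γ : Sequent) : Prop := ∃ S : Set Sequent, Γ ∈ S ∧ ∀ Δ ∈ S, InfStep S Δ

/-- Circular derivability relative to a history of ancestor sequents available for back-links. -/
inductive GLCircAux : List Sequent → Sequent → Prop where
  | axA (H Γ A) : GLCircAux H (A ::ₘ A.negation ::ₘ Γ)
  | axTop (H Γ) : GLCircAux H (Fml.top ::ₘ Γ)
  | back {H Γ} : Γ ∈ H → GLCircAux H Γ
  | andR {H Γ A B} : GLCircAux ((Fml.and A B ::ₘ Γ) :: H) (A ::ₘ Γ) →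
      GLCircAux ((Fml.and A B ::ₘ Γ) :: H) (B ::ₘ Γ) → GLCircAux H (Fml.and A B ::ₘ Γ)
  | orR {H Γ A B} : GLCircAux ((Fml.or A B ::ₘ Γ) :: H) (A ::ₘ B ::ₘ Γ) →
      GLCircAux H (Fml.or A B ::ₘ Γ)
  | boxR {H Γ Δ A} : GLCircAux ((Fml.box A ::ₘ (diaS Γ + Δ)) :: H) (A ::ₘ (Γ + diaS Γ)) →
      GLCircAux H (Fml.box A ::ₘ (diaS Γ + Δ))

/-- GL_circ : circular proofs. -/
def GLCirc (Γ : Sequent) : Prop := GLCircAux [] Γ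

/-- Circular derivations with assumption leaves. `CircDer H b hs bhs Γ` : a circular
derivation of Γ, with ancestor history `H`, `b` true iff a □-rule occurs on the path from
the root, non-boxed assumption leaves `hs` and boxed assumption leaves `bhs`. -/
inductive CircDer : List Sequent → Bool → List Sequent → List Sequent → Sequent → Prop where
  | axA (H b Γ A) : CircDer H b [] [] (A ::ₘ A.negation ::ₘ Γ)
  | axTop (H b Γ) : CircDer H b [] [] (Fml.top ::ₘ Γ)
  | back {H Γ} (b) : Γ ∈ H → CircDer H b [] [] Γ
  | hypU (H Γ) : CircDer H false [Γ] [] Γ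
  | hypB (H Γ) : CircDer H true [] [Γ] Γ
  | andR {H b Γ A B hs₁ bhs₁ hs₂ bhs₂} :
      CircDer ((Fml.and A B ::ₘ Γ) :: H) b hs₁ bhs₁ (A ::ₘ Γ) →
      CircDer ((Fml.and A B ::ₘ Γ) :: H) b hs₂ bhs₂ (B ::ₘ Γ) →
      CircDer H b (hs₁ ++ hs₂) (bhs₁ ++ bhs₂) (Fml.and A B ::ₘ Γ)
  | orR {H b Γ A B hs bhs} :
      CircDer ((Fml.or A B ::ₘ Γ) :: H) b hs bhs (A ::ₘ B ::ₘ Γ) →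
      CircDer H b hs bhs (Fml.or A B ::ₘ Γ)
  | boxR {H b Γ Δ A hs bhs} :
      CircDer ((Fml.box A ::ₘ (diaS Γ + Δ)) :: H) true hs bhs (A ::ₘ (Γ + diaS Γ)) →
      CircDer H b hs bhs (Fml.box A ::ₘ (diaS Γ + Δ))

/-- Propositional atoms occurring in a formula. -/
def Fml.atoms : Fml → Finset ℕ
  | .pos n => {n}
  | .neg n => {n}
  | .top => ∅
  | .bot => ∅
  | .and A B => A.atoms ∪ B.atoms
  | .or A B => A.atoms ∪ B.atoms
  | .box A => A.atoms
  | .dia A => A.atoms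

/-- All literals occurring in a formula (a literal is an atom with a polarity). -/
def Fml.lits : Fml → Finset (ℕ × Bool)
  | .pos n => {(n, true)}
  | .neg n => {(n, false)}
  | .top => ∅
  | .bot => ∅
  | .and A B => A.lits ∪ B.lits
  | .or A B => A.lits ∪ B.lits
  | .box A => A.lits
  | .dia A => A.lits

/-- u(A) : literals occurring outside the scope of all modal operators. -/
def Fml.uvoc : Fml → Finset (ℕ × Bool)
  | .pos n => {(n, true)}
  | .neg n => {(n, false)}
  | .top => ∅
  | .bot => ∅
  | .and A B => A.uvoc ∪ B.uvoc
  | .or A B => A.uvoc ∪ B.uvoc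
  | .box _ => ∅
  | .dia _ => ∅

/-- v(A) : literals occurring within the scope of a modal operator (to be marked). -/
def Fml.vvoc : Fml → Finset (ℕ × Bool)
  | .and A B => A.vvoc ∪ B.vvoc
  | .or A B => A.vvoc ∪ B.vvoc
  | .box A => A.lits
  | .dia A => A.lits
  | _ => ∅

/-- w(A) = u(A) ∪ v(A)°, where the second Boolean component marks literals. -/
def Fml.wvoc (A : Fml) : Finset ((ℕ × Bool) × Bool) :=
  A.uvoc.image (fun L => (L, false)) ∪ A.vvoc.image (fun L => (L, true))

/-- w*(A) = w(A) ∪ w(A)°. -/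
def Fml.wstar (A : Fml) : Finset ((ℕ × Bool) × Bool) :=
  A.wvoc ∪ A.wvoc.image (fun p => (p.1, true))

namespace Fml

@[simp] theorem negation_negation (A : Fml) : A.negation.negation = A := by
  induction A <;> simp_all [negation]

theorem negation_ne_self (A : Fml) : A.negation ≠ A := by
  cases A <;> simp [negation]

def size : Fml → ℕ
  | .and A B | .or A B => A.size + B.size + 1
  | .box A | .dia A => A.size + 1
  | _ => 1

def subformulas : Fml → Finset Fml
  | .and A B => insert (.and A B) (A.subformulas ∪ B.subformulas)
  | .or A B => insert (.or A B) (A.subformulas ∪ B.subformulas)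
  | .box A => insert (.box A) A.subformulas
  | .dia A => insert (.dia A) A.subformulas
  | A => {A}

theorem mem_subformulas_self (A : Fml) : A ∈ A.subformulas := by
  cases A <;> simp [subformulas]

theorem subformulas_subset_of_mem {A B : Fml} (h : B ∈ A.subformulas) :
    B.subformulas ⊆ A.subformulas := by
  induction A with
  | and A₁ A₂ ih₁ ih₂ | or A₁ A₂ ih₁ ih₂ =>
    simp only [subformulas, Finset.mem_insert, Finset.mem_union] at h
    rcases h with rfl | h | h
    · rfl
    · exact (ih₁ h).trans (by intro; simp_all [subformulas])
    · exact (ih₂ h).trans (by intro; simp_all [subformulas])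
  | box A ih | dia A ih =>
    simp only [subformulas, Finset.mem_insert] at h
    rcases h with rfl | h
    · rfl
    · exact (ih h).trans (Finset.subset_insert _ _)
  | _ => simp_all [subformulas]

theorem negation_mem_subformulas {A B : Fml} (h : B ∈ A.subformulas) :
    B.negation ∈ A.negation.subformulas := by
  induction A with
  | and A₁ A₂ ih₁ ih₂ | or A₁ A₂ ih₁ ih₂ =>
    simp only [subformulas, Finset.mem_insert, Finset.mem_union] at h
    rcases h with rfl | h | h
    · exact mem_subformulas_self _
    all_goals simp_all [negation, subformulas]
  | box A ih | dia A ih =>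
    simp only [subformulas, Finset.mem_insert] at h
    rcases h with rfl | h
    · exact mem_subformulas_self _
    · simp_all [negation, subformulas]
  | _ => simp_all [subformulas, mem_subformulas_self]

end Fml

def Fml.undia : Fml → Option Fml
  | .dia B => some B
  | _ => none

def diasOf (Γ : Sequent) : Sequent := Γ.filterMap Fml.undia

theorem mem_diasOf {Γ : Sequent} {B : Fml} : B ∈ diasOf Γ ↔ Fml.dia B ∈ Γ := by
  refine ⟨fun h => ?_, fun h => (Multiset.mem_filterMap _ _).2 ⟨_, h, rfl⟩⟩
  obtain ⟨C, hC, hCB⟩ := (Multiset.mem_filterMap _ _).1 h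
  cases C <;> simp_all [Fml.undia]

theorem diaS_diasOf_le (Γ : Sequent) : diaS (diasOf Γ) ≤ Γ := by
  induction Γ using Multiset.induction_on with
  | empty => rfl
  | cons C Γ ih =>
    cases C <;> simp only [diaS, diasOf] at ih ⊢
    case dia B => simpa [Fml.undia] using ih
    all_goals
      rw [Multiset.filterMap_cons_none _ _ rfl]
      exact ih.trans (Multiset.le_cons_self _ _)

theorem exists_eq_box_cons {Γ : Sequent} {A : Fml} (h : Fml.box A ∈ Γ) :
    ∃ Δ, Γ = Fml.box A ::ₘ (diaS (diasOf Γ) + Δ) := by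
  have hA : Fml.box A ∈ Γ - diaS (diasOf Γ) := by
    have hA : Fml.box A ∉ diaS (diasOf Γ) := by simp [diaS]
    rw [← Multiset.count_pos, Multiset.count_sub, Multiset.count_eq_zero.2 hA]
    exact Multiset.count_pos.2 h
  obtain ⟨Δ, hΔ⟩ := Multiset.exists_cons_of_mem hA
  refine ⟨Δ, ?_⟩
  rw [← Multiset.add_cons, ← hΔ, add_tsub_cancel_of_le (diaS_diasOf_le Γ)]

theorem GLSeq.of_mem_of_negation_mem {Γ : Sequent} {A : Fml} (h : A ∈ Γ)
    (hneg : A.negation ∈ Γ) : GLSeq Γ := by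
  have hneg' : A.negation ∈ Γ.erase A := (Multiset.mem_erase_of_ne A.negation_ne_self).2 hneg
  rw [← Multiset.cons_erase h, ← Multiset.cons_erase hneg']
  exact GLSeq.axA _ _

theorem GLSeq.of_top_mem {Γ : Sequent} (h : Fml.top ∈ Γ) : GLSeq Γ := by
  rw [← Multiset.cons_erase h]
  exact GLSeq.axTop _

/-- The premise of the □_GL rule for `□A ∈ Γ` that keeps every diamond formula of `Γ`. -/
def boxPremise (Γ : Sequent) (A : Fml) : Sequent :=
  A ::ₘ Fml.dia A.negation ::ₘ (diasOf Γ + diaS (diasOf Γ))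

theorem GLSeq.of_boxPremise {Γ : Sequent} {A : Fml} (hA : Fml.box A ∈ Γ)
    (h : GLSeq (boxPremise Γ A)) : GLSeq Γ := by
  obtain ⟨Δ, hΓ⟩ := exists_eq_box_cons hA
  rw [hΓ]
  exact GLSeq.boxGL h

theorem GLSeq.boxPremise_of_dia_negation_mem {Γ : Sequent} {A : Fml}
    (h : Fml.dia A.negation ∈ Γ) : GLSeq (boxPremise Γ A) :=
  GLSeq.of_mem_of_negation_mem (A := A) (by simp [boxPremise])
    (by simp [boxPremise, mem_diasOf, h])

def missingDias (Cl : Finset Fml) (Γ : Sequent) : Finset Fml :=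
  (diasOf Cl.val).toFinset.filter fun B => Fml.dia B ∉ Γ

section missingDias

variable {Cl : Finset Fml} {Γ Γ' : Sequent}

theorem mem_missingDias {B : Fml} :
    B ∈ missingDias Cl Γ ↔ Fml.dia B ∈ Cl ∧ Fml.dia B ∉ Γ := by
  simp [missingDias, mem_diasOf]

theorem missingDias_subset (h : ∀ B, Fml.dia B ∈ Γ → Fml.dia B ∈ Γ') :
    missingDias Cl Γ' ⊆ missingDias Cl Γ := by
  intro B hB
  rw [mem_missingDias] at hB ⊢
  exact ⟨hB.1, fun hΓ => hB.2 (h B hΓ)⟩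

theorem card_missingDias_lt (h : ∀ B, Fml.dia B ∈ Γ → Fml.dia B ∈ Γ') {B : Fml}
    (hCl : Fml.dia B ∈ Cl) (hΓ : Fml.dia B ∉ Γ) (hΓ' : Fml.dia B ∈ Γ') :
    (missingDias Cl Γ').card < (missingDias Cl Γ).card := by
  refine Finset.card_lt_card ((Finset.ssubset_iff_of_subset (missingDias_subset h)).2 ?_)
  exact ⟨B, mem_missingDias.2 ⟨hCl, hΓ⟩, fun hB => (mem_missingDias.1 hB).2 hΓ'⟩

end missingDias

structure GLModel where
  W : Type
  R : W → W → Prop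
  V : W → ℕ → Prop
  trans : ∀ {u v w}, R u v → R v w → R u w
  wf : WellFounded (flip R)

namespace GLModel

variable (M : GLModel)

def Forces : M.W → Fml → Prop
  | w, .pos n => M.V w n
  | w, .neg n => ¬ M.V w n
  | _, .top => True
  | _, .bot => False
  | w, .and A B => Forces w A ∧ Forces w B
  | w, .or A B => Forces w A ∨ Forces w B
  | w, .box A => ∀ v, M.R w v → Forces v A
  | w, .dia A => ∃ v, M.R w v ∧ Forces v A

variable {M}

theorem forces_negation {w : M.W} {A : Fml} : M.Forces w A.negation ↔ ¬ M.Forces w A := by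
  induction A generalizing w <;> simp_all [Forces, Fml.negation, not_or, imp_iff_not_or]

theorem forces_imp {w : M.W} {A B : Fml} :
    M.Forces w (A.imp B) ↔ (M.Forces w A → M.Forces w B) := by
  simp [Fml.imp, Forces, forces_negation, imp_iff_not_or]

theorem forces_listSharp {w : M.W} (l : List Fml) :
    M.Forces w (listSharp l) ↔ ∃ A ∈ l, M.Forces w A := by
  match l with
  | [] => simp [listSharp, Forces]
  | [A] => simp [listSharp]
  | A :: B :: l => simp [listSharp, Forces, forces_listSharp (B :: l)]

theorem forces_sharp {w : M.W} {Γ : Sequent} :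
    M.Forces w (sharp Γ) ↔ ∃ A ∈ Γ, M.Forces w A := by
  simp [sharp, forces_listSharp]

open Classical in
theorem eval_eq_true_iff_forces {w : M.W} {A : Fml} :
    A.eval (fun n => decide (M.V w n)) (fun B => decide (M.Forces w (.box B))) = true ↔
      M.Forces w A := by
  induction A with
  | box A => exact decide_eq_true_iff
  | _ => simp_all [Fml.eval, Forces, forces_negation]

end GLModel

theorem GLH.forces {A : Fml} (h : GLH A) (M : GLModel) (w : M.W) : M.Forces w A := by
  induction h generalizing w with
  | taut A hA => exact GLModel.eval_eq_true_iff_forces.1 (hA _ _)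
  | distr A B =>
    simp only [GLModel.forces_imp, GLModel.Forces]
    exact fun hAB hA v hv => hAB v hv (hA v hv)
  | lob A =>
    simp only [GLModel.forces_imp, GLModel.Forces]
    intro hlob v
    induction v using M.wf.induction with
    | _ v ih => exact fun hwv => hlob v hwv fun u hvu => ih u hvu (M.trans hwv hvu)
  | mp A B _ _ ihAB ihA => exact GLModel.forces_imp.1 (ihAB w) (ihA w)
  | nec A _ ih => exact fun v _ => ih v

namespace GLModel

section RootedSum

variable {I : Type} (M : I → GLModel) (r : ∀ i, (M i).W)

/-- A fresh root below the submodels generated by the points `r i`; the worlds of `M i` not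
reachable from `r i` stay, unreachable from the root. -/
inductive RootedSumRel : Option (Σ i, (M i).W) → Option (Σ i, (M i).W) → Prop
  | root {i w} : Relation.ReflGen (M i).R (r i) w → RootedSumRel none (some ⟨i, w⟩)
  | inner {i w v} : (M i).R w v → RootedSumRel (some ⟨i, w⟩) (some ⟨i, v⟩)

variable {M r}

theorem rootedSumRel_some_iff {i : I} {w : (M i).W} {y : Option (Σ i, (M i).W)} :
    RootedSumRel M r (some ⟨i, w⟩) y ↔ ∃ v, y = some ⟨i, v⟩ ∧ (M i).R w v := by
  constructor
  · rintro ⟨⟩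
    exact ⟨_, rfl, ‹_›⟩
  · rintro ⟨v, rfl, hv⟩
    exact .inner hv

theorem RootedSumRel.trans {x y z : Option (Σ i, (M i).W)} :
    RootedSumRel M r x y → RootedSumRel M r y z → RootedSumRel M r x z
  | .root .refl, .inner hv => .root (.single hv)
  | .root (.single hw), .inner hv => .root (.single ((M _).trans hw hv))
  | .inner hw, .inner hv => .inner ((M _).trans hw hv)

theorem acc_rootedSumRel_some (i : I) (w : (M i).W) :
    Acc (flip (RootedSumRel M r)) (some ⟨i, w⟩) := by
  induction w using (M i).wf.induction with
  | _ w ih =>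
    refine ⟨_, fun y hy => ?_⟩
    obtain ⟨v, rfl, hv⟩ := rootedSumRel_some_iff.1 hy
    exact ih v hv

theorem wellFounded_flip_rootedSumRel : WellFounded (flip (RootedSumRel M r)) := by
  refine ⟨fun x => ?_⟩
  rcases x with _ | ⟨i, w⟩
  · exact ⟨_, fun y hy => by cases hy; exact acc_rootedSumRel_some _ _⟩
  · exact acc_rootedSumRel_some i w

variable (M r)

def rootedSum (V₀ : ℕ → Prop) : GLModel where
  W := Option (Σ i, (M i).W)
  R := RootedSumRel M r
  V
    | none => V₀
    | some ⟨i, w⟩ => (M i).V w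
  trans := RootedSumRel.trans
  wf := wellFounded_flip_rootedSumRel

variable {M r}

theorem forces_rootedSum_some {V₀ : ℕ → Prop} {i : I} {w : (M i).W} {A : Fml} :
    (rootedSum M r V₀).Forces (some ⟨i, w⟩) A ↔ (M i).Forces w A := by
  induction A generalizing w with
  | box A ih =>
    simp only [Forces]
    refine ⟨fun h v hv => ih.1 (h _ (.inner hv)), fun h y hy => ?_⟩
    obtain ⟨v, rfl, hv⟩ := rootedSumRel_some_iff.1 hy
    exact ih.2 (h v hv)
  | dia A ih =>
    simp only [Forces]
    refine ⟨fun ⟨y, hy, hA⟩ => ?_, fun ⟨v, hv, hA⟩ => ⟨_, .inner hv, ih.2 hA⟩⟩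
    obtain ⟨v, rfl, hv⟩ := rootedSumRel_some_iff.1 hy
    exact ⟨v, hv, ih.1 hA⟩
  | _ => simp_all [Forces, rootedSum]

end RootedSum

end GLModel

def Refutable (Γ : Sequent) : Prop :=
  ∃ (M : GLModel) (w : M.W), ∀ A ∈ Γ, ¬ M.Forces w A

namespace Refutable

variable {Δ : Sequent} {A B : Fml}

theorem and_left (h : Refutable (A ::ₘ Δ)) : Refutable (Fml.and A B ::ₘ Δ) := by
  obtain ⟨M, w, hw⟩ := h
  refine ⟨M, w, ?_⟩
  simp only [Multiset.forall_mem_cons, GLModel.Forces] at hw ⊢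
  exact ⟨fun h => hw.1 h.1, hw.2⟩

theorem and_right (h : Refutable (B ::ₘ Δ)) : Refutable (Fml.and A B ::ₘ Δ) := by
  obtain ⟨M, w, hw⟩ := h
  refine ⟨M, w, ?_⟩
  simp only [Multiset.forall_mem_cons, GLModel.Forces] at hw ⊢
  exact ⟨fun h => hw.1 h.2, hw.2⟩

theorem or (h : Refutable (A ::ₘ B ::ₘ Δ)) : Refutable (Fml.or A B ::ₘ Δ) := by
  obtain ⟨M, w, hw⟩ := h
  refine ⟨M, w, ?_⟩
  simp only [Multiset.forall_mem_cons, GLModel.Forces] at hw ⊢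
  exact ⟨fun h => h.elim hw.1 hw.2.1, hw.2.2⟩

end Refutable

theorem not_refutable_of_GLH_sharp {Γ : Sequent} (h : GLH (sharp Γ)) : ¬ Refutable Γ := by
  rintro ⟨M, w, hw⟩
  obtain ⟨A, hA, hwA⟩ := GLModel.forces_sharp.1 (h.forces M w)
  exact hw A hA hwA

/-- The countermodel of a saturated sequent puts a root below countermodels of all its
□_GL-premises, and makes exactly the atoms `p` with `¬p ∈ Γ` true at the root. -/
theorem refutable_of_saturated {Γ : Sequent} (htop : Fml.top ∉ Γ)
    (hpair : ∀ A ∈ Γ, A.negation ∉ Γ) (hand : ∀ A B, Fml.and A B ∉ Γ)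
    (hor : ∀ A B, Fml.or A B ∉ Γ)
    (hbox : ∀ A, Fml.box A ∈ Γ → Refutable (boxPremise Γ A)) :
    Refutable Γ := by
  choose M r hr using fun i : {A // Fml.box A ∈ Γ} => hbox i.1 i.2
  refine ⟨GLModel.rootedSum M r (fun n => Fml.neg n ∈ Γ), none, fun C hC => ?_⟩
  cases C with
  | pos n => exact hpair _ hC
  | neg n => exact fun h => h hC
  | top => exact absurd hC htop
  | bot => exact id
  | and A B => exact absurd hC (hand A B)
  | or A B => exact absurd hC (hor A B)
  | box A =>
    intro h
    have hA := h _ (.root (i := ⟨A, hC⟩) .refl)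
    exact hr ⟨A, hC⟩ A (by simp [boxPremise]) (GLModel.forces_rootedSum_some.1 hA)
  | dia B =>
    rintro ⟨_, @⟨i, w, hw⟩, hB⟩
    have hB' : B ∈ diasOf Γ := mem_diasOf.2 hC
    rw [GLModel.forces_rootedSum_some] at hB
    cases hw with
    | refl => exact hr i B (by simp [boxPremise, hB']) hB
    | single hw => exact hr i (Fml.dia B) (by simp [boxPremise, diaS, hB']) ⟨w, hw, hB⟩

structure SubformulaClosed (Cl : Finset Fml) : Prop where
  subformulas_subset : ∀ A ∈ Cl, A.subformulas ⊆ Cl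
  negation_mem : ∀ A ∈ Cl, A.negation ∈ Cl

namespace SubformulaClosed

variable {Cl : Finset Fml} {A B : Fml}

theorem of_and_mem (hCl : SubformulaClosed Cl) (h : Fml.and A B ∈ Cl) : A ∈ Cl ∧ B ∈ Cl :=
  ⟨hCl.subformulas_subset _ h (by simp [Fml.subformulas, Fml.mem_subformulas_self]),
    hCl.subformulas_subset _ h (by simp [Fml.subformulas, Fml.mem_subformulas_self])⟩

theorem of_or_mem (hCl : SubformulaClosed Cl) (h : Fml.or A B ∈ Cl) : A ∈ Cl ∧ B ∈ Cl :=
  ⟨hCl.subformulas_subset _ h (by simp [Fml.subformulas, Fml.mem_subformulas_self]),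
    hCl.subformulas_subset _ h (by simp [Fml.subformulas, Fml.mem_subformulas_self])⟩

theorem of_box_mem (hCl : SubformulaClosed Cl) (h : Fml.box A ∈ Cl) : A ∈ Cl :=
  hCl.subformulas_subset _ h (by simp [Fml.subformulas, Fml.mem_subformulas_self])

theorem of_dia_mem (hCl : SubformulaClosed Cl) (h : Fml.dia A ∈ Cl) : A ∈ Cl :=
  hCl.subformulas_subset _ h (by simp [Fml.subformulas, Fml.mem_subformulas_self])

theorem boxPremise_subset (hCl : SubformulaClosed Cl) {Γ : Sequent}
    (hΓ : ∀ C ∈ Γ, C ∈ Cl) (hA : Fml.box A ∈ Γ) :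
    ∀ C ∈ boxPremise Γ A, C ∈ Cl := by
  simp only [boxPremise, Multiset.forall_mem_cons, Multiset.mem_add, diaS, Multiset.mem_map,
    mem_diasOf]
  refine ⟨hCl.of_box_mem (hΓ _ hA), hCl.negation_mem _ (hΓ _ hA), ?_⟩
  rintro C (hC | ⟨B, hB, rfl⟩)
  · exact hCl.of_dia_mem (hΓ _ hC)
  · exact hΓ _ hB

end SubformulaClosed

def subformulaClosure (Γ : Sequent) : Finset Fml :=
  Γ.toFinset.biUnion fun A => A.subformulas ∪ A.negation.subformulas

theorem subformulaClosed_subformulaClosure (Γ : Sequent) :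
    SubformulaClosed (subformulaClosure Γ) := by
  constructor
  all_goals
    intro B hB
    simp only [subformulaClosure, Finset.mem_biUnion, Finset.mem_union] at hB
    obtain ⟨A, hA, hB | hB⟩ := hB
  · exact (Fml.subformulas_subset_of_mem hB).trans
      (Finset.subset_biUnion_of_mem _ hA |>.trans' Finset.subset_union_left)
  · exact (Fml.subformulas_subset_of_mem hB).trans
      (Finset.subset_biUnion_of_mem _ hA |>.trans' Finset.subset_union_right)
  · exact Finset.mem_biUnion.2
      ⟨A, hA, Finset.mem_union_right _ (Fml.negation_mem_subformulas hB)⟩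
  · have := Fml.negation_mem_subformulas hB
    rw [Fml.negation_negation] at this
    exact Finset.mem_biUnion.2 ⟨A, hA, Finset.mem_union_left _ this⟩

theorem mem_subformulaClosure_of_mem {Γ : Sequent} {A : Fml} (hA : A ∈ Γ) :
    A ∈ subformulaClosure Γ :=
  Finset.mem_biUnion.2
    ⟨A, Multiset.mem_toFinset.2 hA, Finset.mem_union_left _ A.mem_subformulas_self⟩

def searchMeasure (Cl : Finset Fml) (Γ : Sequent) : ℕ × ℕ :=
  ((missingDias Cl Γ).card, (Γ.map Fml.size).sum)

section searchMeasure

variable {Cl : Finset Fml} {Γ Γ' : Sequent}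

theorem searchMeasure_lt_of_size_lt (hdia : ∀ B, Fml.dia B ∈ Γ → Fml.dia B ∈ Γ')
    (hsize : (Γ'.map Fml.size).sum < (Γ.map Fml.size).sum) :
    Prod.Lex (· < ·) (· < ·) (searchMeasure Cl Γ') (searchMeasure Cl Γ) :=
  Prod.Lex.toLex_lt_toLex'.2 ⟨Finset.card_le_card (missingDias_subset hdia), fun _ => hsize⟩

theorem searchMeasure_lt_of_dia_mem (hdia : ∀ B, Fml.dia B ∈ Γ → Fml.dia B ∈ Γ') {B : Fml}
    (hCl : Fml.dia B ∈ Cl) (hΓ : Fml.dia B ∉ Γ) (hΓ' : Fml.dia B ∈ Γ') :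
    Prod.Lex (· < ·) (· < ·) (searchMeasure Cl Γ') (searchMeasure Cl Γ) :=
  .left _ _ (card_missingDias_lt hdia hCl hΓ hΓ')

end searchMeasure

/-- Proof search. The □_GL-premise contains the new diamond `◇¬A` of `Cl`, the propositional
premises keep every diamond and are smaller, so `searchMeasure` decreases lexicographically. -/
theorem GLSeq_or_refutable {Cl : Finset Fml} (hCl : SubformulaClosed Cl) (Γ : Sequent)
    (hΓ : ∀ A ∈ Γ, A ∈ Cl) : GLSeq Γ ∨ Refutable Γ := by
  by_cases htop : Fml.top ∈ Γ
  · exact .inl (GLSeq.of_top_mem htop)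
  by_cases hpair : ∃ A ∈ Γ, A.negation ∈ Γ
  · obtain ⟨A, hA, hA'⟩ := hpair
    exact .inl (GLSeq.of_mem_of_negation_mem hA hA')
  by_cases hand : ∃ A B, Fml.and A B ∈ Γ
  · obtain ⟨A, B, hAB⟩ := hand
    obtain ⟨Δ, rfl⟩ := Multiset.exists_cons_of_mem hAB
    rw [Multiset.forall_mem_cons] at hΓ
    have hCl' := hCl.of_and_mem hΓ.1
    rcases GLSeq_or_refutable hCl (A ::ₘ Δ) (Multiset.forall_mem_cons.2 ⟨hCl'.1, hΓ.2⟩)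
      with dA | rA
    · rcases GLSeq_or_refutable hCl (B ::ₘ Δ) (Multiset.forall_mem_cons.2 ⟨hCl'.2, hΓ.2⟩)
        with dB | rB
      · exact .inl (GLSeq.andR dA dB)
      · exact .inr rB.and_right
    · exact .inr rA.and_left
  by_cases hor : ∃ A B, Fml.or A B ∈ Γ
  · obtain ⟨A, B, hAB⟩ := hor
    obtain ⟨Δ, rfl⟩ := Multiset.exists_cons_of_mem hAB
    rw [Multiset.forall_mem_cons] at hΓ
    have hCl' := hCl.of_or_mem hΓ.1
    exact (GLSeq_or_refutable hCl (A ::ₘ B ::ₘ Δ) (by simpa [hCl'] using hΓ.2)).imp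
      GLSeq.orR .or
  by_cases hbox : ∃ A, Fml.box A ∈ Γ ∧ GLSeq (boxPremise Γ A)
  · obtain ⟨A, hA, hd⟩ := hbox
    exact .inl (GLSeq.of_boxPremise hA hd)
  push Not at hpair hand hor hbox
  refine .inr (refutable_of_saturated htop hpair hand hor fun A hA => ?_)
  have hdia : Fml.dia A.negation ∉ Γ := fun h =>
    hbox A hA (GLSeq.boxPremise_of_dia_negation_mem h)
  exact (GLSeq_or_refutable hCl (boxPremise Γ A) (hCl.boxPremise_subset hΓ hA)).resolve_left
    (hbox A hA)
termination_by searchMeasure Cl Γ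
decreasing_by
  all_goals subst_vars
  · exact searchMeasure_lt_of_size_lt (fun _ h => Multiset.mem_cons_of_mem (by simpa using h))
      (by simp [Fml.size])
  · exact searchMeasure_lt_of_size_lt (fun _ h => Multiset.mem_cons_of_mem (by simpa using h))
      (by simp [Fml.size])
  · exact searchMeasure_lt_of_size_lt
      (fun _ h => Multiset.mem_cons_of_mem (Multiset.mem_cons_of_mem (by simpa using h)))
      (by simp [Fml.size]; omega)
  · exact searchMeasure_lt_of_dia_mem (fun _ h => by simp [boxPremise, diaS, mem_diasOf, h])
      (hCl.negation_mem _ (hΓ _ hA)) hdia (by simp [boxPremise])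

theorem GLSeq_complete (Γ : Sequent) (h : GLH (sharp Γ)) : GLSeq Γ :=
  (GLSeq_or_refutable (subformulaClosed_subformulaClosure Γ) Γ
    fun _ => mem_subformulaClosure_of_mem).resolve_right (not_refutable_of_GLH_sharp h)
end

section
/- The inverse of the conjunction rule is admissible for GL_∞: if Γ, A∧B has an ∞-proof, then both Γ, A and Γ, B have ∞-proofs. -/
lemma Fml.negneg (A : Fml) : A.negation.negation = A := by
  induction A <;> simp [Fml.negation, *]

lemma infStep_mono {S T : Set Sequent} (hST : S ⊆ T) {Γ} (h : InfStep S Γ) : InfStep T Γ := by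
  rcases h with h | h | ⟨Δ, A, B, h1, h2, h3⟩ | ⟨Δ, A, B, h1, h2⟩ | ⟨Δ, Θ, A, h1, h2⟩
  · exact Or.inl h
  · exact Or.inr (Or.inl h)
  · exact Or.inr (Or.inr (Or.inl ⟨Δ, A, B, h1, hST h2, hST h3⟩))
  · exact Or.inr (Or.inr (Or.inr (Or.inl ⟨Δ, A, B, h1, hST h2⟩)))
  · exact Or.inr (Or.inr (Or.inr (Or.inr ⟨Δ, Θ, A, h1, hST h2⟩)))

lemma glinf_unfold {Γ} (h : GLInf Γ) : InfStep {Δ | GLInf Δ} Γ := by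
  obtain ⟨S, hΓ, hS⟩ := h
  exact infStep_mono (fun Δ hΔ => show GLInf Δ from ⟨S, hΔ, hS⟩) (hS Γ hΓ)

lemma glinf_fold {Γ} (h : InfStep {Δ | GLInf Δ} Γ) : GLInf Γ := by
  refine ⟨insert Γ {Δ | GLInf Δ}, Set.mem_insert _ _, fun Δ hΔ => ?_⟩
  rcases hΔ with rfl | hΔ
  · exact infStep_mono (Set.subset_insert _ _) h
  · exact infStep_mono (Set.subset_insert _ _) (glinf_unfold hΔ)

lemma glinf_coind (R : Set Sequent)
    (hR : ∀ Δ ∈ R, InfStep (R ∪ {Δ | GLInf Δ}) Δ ∨ GLInf Δ)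
    {Γ} (h : Γ ∈ R) : GLInf Γ := by
  refine ⟨R ∪ {Δ | GLInf Δ}, Or.inl h, fun Δ hΔ => ?_⟩
  rcases hΔ with hΔ | hΔ
  · rcases hR Δ hΔ with hs | hg
    · exact hs
    · exact infStep_mono (Set.subset_union_right) (glinf_unfold hg)
  · exact infStep_mono (Set.subset_union_right) (glinf_unfold hΔ)

lemma ginf_axA (C : Fml) (Δ : Sequent) : GLInf (C ::ₘ C.negation ::ₘ Δ) :=
  glinf_fold (Or.inl ⟨Δ, C, rfl⟩)

lemma ginf_top (Δ : Sequent) : GLInf (Fml.top ::ₘ Δ) :=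
  glinf_fold (Or.inr (Or.inl ⟨Δ, rfl⟩))

lemma ginf_or {C D : Fml} {Δ : Sequent} (h : GLInf (C ::ₘ D ::ₘ Δ)) :
    GLInf (Fml.or C D ::ₘ Δ) :=
  glinf_fold (Or.inr (Or.inr (Or.inr (Or.inl ⟨Δ, C, D, rfl, h⟩))))

lemma glinf_and_inv (A B C : Fml) (hC : C = A ∨ C = B) :
    ∀ Γ : Sequent, GLInf (Fml.and A B ::ₘ Γ) → GLInf (C ::ₘ Γ) := by
  intro Γ0 h0
  set R : Set Sequent := {Δ' | ∃ Γ, Δ' = C ::ₘ Γ ∧ GLInf (Fml.and A B ::ₘ Γ)} with hRdef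
  refine glinf_coind R ?_ ⟨Γ0, rfl, h0⟩
  rintro Δ' ⟨Γ, rfl, hg⟩
  -- the finite proof that shows up when the A∧B is principal in an axiom
  have hax : ∀ Θ : Sequent,
      GLInf (C ::ₘ Fml.or A.negation B.negation ::ₘ Θ) := by
    intro Θ
    rw [Multiset.cons_swap]
    apply ginf_or
    rcases hC with h | h
    · rw [h]
      have : A.negation ::ₘ B.negation ::ₘ A ::ₘ Θ
          = A.negation ::ₘ A.negation.negation ::ₘ (B.negation ::ₘ Θ) := by
        rw [Fml.negneg]
        exact congrArg _ (Multiset.cons_swap _ _ _)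
      rw [this]; exact ginf_axA _ _
    · rw [h]
      have : A.negation ::ₘ B.negation ::ₘ B ::ₘ Θ
          = B.negation ::ₘ B.negation.negation ::ₘ (A.negation ::ₘ Θ) := by
        rw [Fml.negneg, Multiset.cons_swap]
        exact congrArg _ (Multiset.cons_swap _ _ _)
      rw [this]; exact ginf_axA _ _
  rcases glinf_unfold hg with ⟨Θ, D, hD⟩ | ⟨Θ, hT⟩ |
    ⟨Θ, A', B', h1, h2, h3⟩ | ⟨Θ, A', B', h1, h2⟩ | ⟨Θ, Ξ, A', h1, h2⟩
  · -- axiom D, D̄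
    rcases (Multiset.cons_eq_cons).1 hD with ⟨rfl, rfl⟩ | ⟨_, cs, rfl, h2⟩
    · exact Or.inr (hax Θ)
    · rcases (Multiset.cons_eq_cons).1 h2 with ⟨hDn, rfl⟩ | ⟨_, ds, rfl, rfl⟩
      · -- D.negation = A ∧ B, so D = ¬(A∧B)
        have hD2 : D = Fml.or A.negation B.negation := by
          have := congrArg Fml.negation hDn
          rw [Fml.negneg] at this
          rw [this]; rfl
        subst hD2
        exact Or.inr (hax _)
      · -- both D and D̄ are side formulas
        refine Or.inr ?_
        have : C ::ₘ D ::ₘ D.negation ::ₘ ds = D ::ₘ D.negation ::ₘ (C ::ₘ ds) := by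
          rw [Multiset.cons_swap C D, Multiset.cons_swap C D.negation]
        rw [this]; exact ginf_axA _ _
  · -- ⊤ axiom
    rcases (Multiset.cons_eq_cons).1 hT with ⟨h, _⟩ | ⟨_, cs, rfl, rfl⟩
    · exact absurd h (by simp)
    · refine Or.inr ?_
      rw [Multiset.cons_swap]
      exact ginf_top _
  · -- ∧ rule
    rcases (Multiset.cons_eq_cons).1 h1 with ⟨hab, rfl⟩ | ⟨_, cs, rfl, rfl⟩
    · -- principal: the premise is exactly what we want
      obtain ⟨rfl, rfl⟩ : A = A' ∧ B = B' := by
        injection hab with hh1 hh2; exact ⟨hh1, hh2⟩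
      rcases hC with rfl | rfl
      · exact Or.inr h2
      · exact Or.inr h3
    · -- A'∧B' is a side formula
      refine Or.inl (Or.inr (Or.inr (Or.inl ⟨C ::ₘ cs, A', B', ?_, ?_, ?_⟩)))
      · rw [Multiset.cons_swap]
      · exact Or.inl ⟨A' ::ₘ cs, Multiset.cons_swap _ _ _,
          by rwa [Multiset.cons_swap] at h2⟩
      · exact Or.inl ⟨B' ::ₘ cs, Multiset.cons_swap _ _ _,
          by rwa [Multiset.cons_swap] at h3⟩
  · -- ∨ rule
    rcases (Multiset.cons_eq_cons).1 h1 with ⟨hab, _⟩ | ⟨_, cs, rfl, rfl⟩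
    · exact absurd hab (by simp)
    · refine Or.inl (Or.inr (Or.inr (Or.inr (Or.inl ⟨C ::ₘ cs, A', B', ?_, ?_⟩))))
      · rw [Multiset.cons_swap]
      · refine Or.inl ⟨A' ::ₘ B' ::ₘ cs, ?_, ?_⟩
        · rw [Multiset.cons_swap C A', Multiset.cons_swap C B']
        · have : Fml.and A B ::ₘ A' ::ₘ B' ::ₘ cs = A' ::ₘ B' ::ₘ Fml.and A B ::ₘ cs := by
            rw [Multiset.cons_swap (Fml.and A B) A', Multiset.cons_swap (Fml.and A B) B']
          rw [this]; exact h2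
  · -- □ rule
    rcases (Multiset.cons_eq_cons).1 h1 with ⟨hab, _⟩ | ⟨_, cs, rfl, hcs⟩
    · exact absurd hab (by simp)
    · -- A∧B occurs in diaS Θ + Ξ; it cannot be in diaS Θ
      have hmem : Fml.and A B ∈ diaS Θ + Ξ := by
        rw [hcs]; exact Multiset.mem_cons_self _ _
      rcases Multiset.mem_add.1 hmem with hm | hm
      · rcases Multiset.mem_map.1 hm with ⟨x, _, hx⟩
        exact absurd hx (by simp)
      · obtain ⟨Ξ', rfl⟩ := Multiset.exists_cons_of_mem hm
        have hcs' : cs = diaS Θ + Ξ' := by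
          have : diaS Θ + (Fml.and A B ::ₘ Ξ') = Fml.and A B ::ₘ (diaS Θ + Ξ') := by
            rw [Multiset.add_cons]
          rw [this] at hcs
          exact (Multiset.cons_inj_right _).1 hcs.symm
        subst hcs'
        refine Or.inl (Or.inr (Or.inr (Or.inr (Or.inr ⟨Θ, C ::ₘ Ξ', A', ?_, Or.inr h2⟩))))
        have : diaS Θ + (C ::ₘ Ξ') = C ::ₘ (diaS Θ + Ξ') := by
          rw [Multiset.add_cons]
        rw [this, Multiset.cons_swap]

theorem GLInf_and_inversion (Γ : Sequent) (A B : Fml) (h : GLInf (Fml.and A B ::ₘ Γ)) :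
    GLInf (A ::ₘ Γ) ∧ GLInf (B ::ₘ Γ) :=
  ⟨glinf_and_inv A B A (Or.inl rfl) Γ h, glinf_and_inv A B B (Or.inr rfl) Γ h⟩
end

section
/- Every sequent provable in GL_∞ has an ∞-proof containing only finitely many distinct sequents (equivalently, a regular ∞-proof). -/
namespace GLReg

/-- weight of a formula -/
def wt : Fml → ℕ
  | .pos _ => 1
  | .neg _ => 1
  | .top => 1
  | .bot => 1
  | .and A B => wt A + wt B + 1
  | .or A B => wt A + wt B + 1
  | .box A => wt A + 1
  | .dia A => wt A + 1

lemma one_le_wt (A : Fml) : 1 ≤ wt A := by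
  cases A <;> simp [wt]

/-- weight of a sequent -/
def wtm (m : Sequent) : ℕ := (m.map wt).sum

lemma wtm_cons (A : Fml) (m : Sequent) : wtm (A ::ₘ m) = wt A + wtm m := by
  simp [wtm]

lemma wtm_add (m n : Sequent) : wtm (m + n) = wtm m + wtm n := by
  simp [wtm]

lemma card_le_wtm (m : Sequent) : m.card ≤ wtm m := by
  induction m using Multiset.induction with
  | empty => simp [wtm]
  | cons A s ih =>
    rw [wtm_cons, Multiset.card_cons]
    have := one_le_wt A
    omega

/-- subformulas -/
def subf : Fml → Finset Fml
  | .pos n => {.pos n}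
  | .neg n => {.neg n}
  | .top => {.top}
  | .bot => {.bot}
  | .and A B => insert (.and A B) (subf A ∪ subf B)
  | .or A B => insert (.or A B) (subf A ∪ subf B)
  | .box A => insert (.box A) (subf A)
  | .dia A => insert (.dia A) (subf A)

lemma mem_subf_self (A : Fml) : A ∈ subf A := by
  cases A <;> simp [subf]

lemma subf_trans : ∀ A : Fml, ∀ B ∈ subf A, subf B ⊆ subf A := by
  intro A
  induction A with
  | pos n => intro B hB; simp [subf] at hB; subst hB; simp [subf]
  | neg n => intro B hB; simp [subf] at hB; subst hB; simp [subf]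
  | top => intro B hB; simp [subf] at hB; subst hB; simp [subf]
  | bot => intro B hB; simp [subf] at hB; subst hB; simp [subf]
  | and A₁ A₂ ih₁ ih₂ =>
    intro B hB
    simp only [subf, Finset.mem_insert, Finset.mem_union] at hB
    rcases hB with rfl | h | h
    · exact subset_refl _
    · exact (ih₁ B h).trans (by intro x hx; simp [subf, Finset.mem_union]; tauto)
    · exact (ih₂ B h).trans (by intro x hx; simp [subf, Finset.mem_union]; tauto)
  | or A₁ A₂ ih₁ ih₂ =>
    intro B hB
    simp only [subf, Finset.mem_insert, Finset.mem_union] at hB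
    rcases hB with rfl | h | h
    · exact subset_refl _
    · exact (ih₁ B h).trans (by intro x hx; simp [subf, Finset.mem_union]; tauto)
    · exact (ih₂ B h).trans (by intro x hx; simp [subf, Finset.mem_union]; tauto)
  | box A ih =>
    intro B hB
    simp only [subf, Finset.mem_insert] at hB
    rcases hB with rfl | h
    · exact subset_refl _
    · exact (ih B h).trans (by intro x hx; simp [subf]; tauto)
  | dia A ih =>
    intro B hB
    simp only [subf, Finset.mem_insert] at hB
    rcases hB with rfl | h
    · exact subset_refl _
    · exact (ih B h).trans (by intro x hx; simp [subf]; tauto)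

/-- Kripke satisfaction on transitive conversely-wellfounded frames -/
def Sat {W : Type} (R : W → W → Prop) (val : W → ℕ → Bool) : Fml → W → Prop
  | .pos n, w => val w n = true
  | .neg n, w => val w n = false
  | .top, _ => True
  | .bot, _ => False
  | .and A B, w => Sat R val A w ∧ Sat R val B w
  | .or A B, w => Sat R val A w ∨ Sat R val B w
  | .box A, w => ∀ v, R w v → Sat R val A v
  | .dia A, w => ∃ v, R w v ∧ Sat R val A v

lemma sat_negation {W : Type} (R : W → W → Prop) (val : W → ℕ → Bool) :
    ∀ (A : Fml) (w : W), Sat R val A.negation w ↔ ¬ Sat R val A w := by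
  intro A
  induction A with
  | pos n => intro w; simp [Fml.negation, Sat]
  | neg n => intro w; simp [Fml.negation, Sat]
  | top => intro w; simp [Fml.negation, Sat]
  | bot => intro w; simp [Fml.negation, Sat]
  | and A B ihA ihB =>
    intro w
    simp only [Fml.negation, Sat, ihA, ihB]
    tauto
  | or A B ihA ihB =>
    intro w
    simp only [Fml.negation, Sat, ihA, ihB]
    tauto
  | box A ih =>
    intro w
    simp only [Fml.negation, Sat]
    constructor
    · rintro ⟨v, hv, hA⟩ h
      exact (ih v).mp hA (h v hv)
    · intro h
      by_contra hc
      push_neg at hc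
      exact h fun v hv => by
        by_contra hA
        exact hc v hv ((ih v).mpr hA)
  | dia A ih =>
    intro w
    simp only [Fml.negation, Sat]
    constructor
    · rintro h ⟨v, hv, hA⟩
      exact (ih v).mp (h v hv) hA
    · intro h v hv
      rw [ih v]
      intro hA
      exact h ⟨v, hv, hA⟩

def SeqTrue {W : Type} (R : W → W → Prop) (val : W → ℕ → Bool) (m : Sequent) (w : W) : Prop :=
  ∃ A ∈ m, Sat R val A w

def Valid (m : Sequent) : Prop :=
  ∀ (W : Type) (R : W → W → Prop) (val : W → ℕ → Bool),
    Transitive R → WellFounded (flip R) → ∀ w, SeqTrue R val m w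

lemma sound {S : Set Sequent} (hS : ∀ Δ ∈ S, InfStep S Δ) :
    ∀ m ∈ S, Valid m := by
  intro m hm W R val htrans hwf w
  revert m
  induction w using hwf.induction with
  | _ w IHw =>
    -- inner strong induction on weight
    suffices H : ∀ n, ∀ m ∈ S, wtm m ≤ n → SeqTrue R val m w by
      intro m hm; exact H (wtm m) m hm le_rfl
    intro n
    induction n using Nat.strong_induction_on with
    | _ n IHn =>
      intro m hm hwt
      rcases hS m hm with ⟨Δ, A, rfl⟩ | ⟨Δ, rfl⟩ | ⟨Δ, A, B, rfl, h1, h2⟩ |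
        ⟨Δ, A, B, rfl, h1⟩ | ⟨Δ, Θ, A, rfl, h1⟩
      · -- axiom A, Ā
        by_cases hA : Sat R val A w
        · exact ⟨A, by simp, hA⟩
        · exact ⟨A.negation, by simp, (sat_negation R val A w).mpr hA⟩
      · exact ⟨Fml.top, by simp, trivial⟩
      · -- and
        have hlt : wtm (A ::ₘ Δ) < n := by
          simp only [wtm_cons, wt] at hwt ⊢
          have := one_le_wt B
          omega
        have hlt' : wtm (B ::ₘ Δ) < n := by
          simp only [wtm_cons, wt] at hwt ⊢
          have := one_le_wt A
          omega
        rcases IHn _ hlt (A ::ₘ Δ) h1 le_rfl with ⟨C, hC, hCs⟩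
        rcases Multiset.mem_cons.mp hC with rfl | hC'
        · rcases IHn _ hlt' (B ::ₘ Δ) h2 le_rfl with ⟨D, hD, hDs⟩
          rcases Multiset.mem_cons.mp hD with rfl | hD'
          · exact ⟨Fml.and C D, by simp, ⟨hCs, hDs⟩⟩
          · exact ⟨D, by simp [hD'], hDs⟩
        · exact ⟨C, by simp [hC'], hCs⟩
      · -- or
        have hlt : wtm (A ::ₘ B ::ₘ Δ) < n := by
          simp only [wtm_cons, wt] at hwt ⊢
          omega
        rcases IHn _ hlt (A ::ₘ B ::ₘ Δ) h1 le_rfl with ⟨C, hC, hCs⟩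
        rcases Multiset.mem_cons.mp hC with rfl | hC'
        · exact ⟨Fml.or C B, by simp, Or.inl hCs⟩
        · rcases Multiset.mem_cons.mp hC' with rfl | hC''
          · exact ⟨Fml.or A C, by simp, Or.inr hCs⟩
          · exact ⟨C, by simp [hC''], hCs⟩
      · -- box
        by_contra hfalse
        simp only [SeqTrue, not_exists] at hfalse
        have hboxA : Sat R val (Fml.box A) w := by
          intro w' hw'
          rcases IHw w' hw' (A ::ₘ (Δ + diaS Δ)) h1 with ⟨C, hC, hCs⟩
          rcases Multiset.mem_cons.mp hC with rfl | hC'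
          · exact hCs
          · rcases Multiset.mem_add.mp hC' with hCΔ | hCd
            · -- C ∈ Δ, so ◇C ∈ m, true at w : contradiction
              exfalso
              have hmem : Fml.dia C ∈ Fml.box A ::ₘ (diaS Δ + Θ) := by
                simp only [Multiset.mem_cons, Multiset.mem_add]
                exact Or.inr (Or.inl (Multiset.mem_map_of_mem _ hCΔ))
              exact hfalse _ ⟨hmem, ⟨w', hw', hCs⟩⟩
            · -- C = ◇B ∈ ◇Δ
              exfalso
              rcases Multiset.mem_map.mp hCd with ⟨B, hBΔ, rfl⟩
              rcases hCs with ⟨w'', hw'', hBs⟩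
              have hmem : Fml.dia B ∈ Fml.box A ::ₘ (diaS Δ + Θ) := by
                simp only [Multiset.mem_cons, Multiset.mem_add]
                exact Or.inr (Or.inl (Multiset.mem_map_of_mem _ hBΔ))
              exact hfalse _ ⟨hmem, ⟨w'', htrans hw' hw'', hBs⟩⟩
        exact hfalse (Fml.box A) ⟨by simp, hboxA⟩

abbrev Idx (m : Sequent) : Type := {A : Fml // Fml.box A ∈ m}

lemma box_complete (m : Sequent) (Δ₀ : Multiset Fml)
    (hval : Valid m)
    (htop : Fml.top ∉ m)
    (hlit : ∀ n, Fml.pos n ∈ m → Fml.neg n ∉ m)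
    (hand : ∀ A B, Fml.and A B ∉ m)
    (hor : ∀ A B, Fml.or A B ∉ m)
    (hΔ₀ : ∀ B, B ∈ Δ₀ ↔ Fml.dia B ∈ m) :
    ∃ A, Fml.box A ∈ m ∧ Valid (A ::ₘ (Δ₀ + diaS Δ₀)) := by
  by_contra hcon
  push_neg at hcon
  have hex : ∀ a : Idx m, ∃ (W : Type) (R : W → W → Prop)
      (val : W → ℕ → Bool) (w : W), Transitive R ∧ WellFounded (flip R) ∧
      ¬ SeqTrue R val (a.1 ::ₘ (Δ₀ + diaS Δ₀)) w := by
    rintro ⟨A, hA⟩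
    have h := hcon A hA
    simp only [Valid] at h
    push_neg at h
    obtain ⟨W, R, val, htr, hwfR, w, hw⟩ := h
    exact ⟨W, R, val, w, htr, hwfR, hw⟩
  choose W R val w0 htr hwf hfl using hex
  -- the combined model
  let V := Option ((a : Idx m) × W a)
  let R' : V → V → Prop := fun p q =>
    match q with
    | none => False
    | some ⟨b, y⟩ =>
      match p with
      | none => y = w0 b ∨ R b (w0 b) y
      | some ⟨a, x⟩ => ∃ h : a = b, R b (cast (congrArg W h) x) y
  let val' : V → ℕ → Bool := fun p n =>
    match p with
    | none => decide (Fml.neg n ∈ m)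
    | some s => val s.1 s.2 n
  have htrans' : Transitive R' := by
    rintro p q r hpq hqr
    cases r with
    | none => exact (hqr : False).elim
    | some s =>
      obtain ⟨c, z⟩ := s
      cases q with
      | none => exact (hpq : False).elim
      | some s' =>
        obtain ⟨b, y⟩ := s'
        obtain ⟨hbc, hyz⟩ := hqr
        cases hbc
        cases p with
        | none =>
          rcases hpq with rfl | h
          · exact Or.inr hyz
          · exact Or.inr (htr _ h hyz)
        | some s'' =>
          obtain ⟨a, x⟩ := s''
          obtain ⟨hab, hxy⟩ := hpq
          cases hab
          exact ⟨rfl, htr _ hxy hyz⟩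
  have hacc : ∀ (a : Idx m) (x : W a), Acc (flip R') (some ⟨a, x⟩ : V) := by
    intro a x
    induction x using (hwf a).induction with
    | _ x IH =>
      constructor
      intro q hq
      cases q with
      | none => exact hq.elim
      | some s =>
        obtain ⟨b, y⟩ := s
        obtain ⟨hab, hr⟩ := hq
        cases hab
        exact IH y hr
  have hwf' : WellFounded (flip R') := by
    constructor
    intro v
    cases v with
    | none =>
      constructor
      intro q hq
      cases q with
      | none => exact hq.elim
      | some s => exact hacc s.1 s.2
    | some s => exact hacc s.1 s.2
  have htf : ∀ (C : Fml) (a : Idx m) (x : W a),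
      Sat R' val' C (some ⟨a, x⟩) ↔ Sat (R a) (val a) C x := by
    intro C
    induction C with
    | pos n => intro a x; simp [Sat, val']
    | neg n => intro a x; simp [Sat, val']
    | top => intro a x; simp [Sat]
    | bot => intro a x; simp [Sat]
    | and A B ihA ihB => intro a x; simp only [Sat, ihA, ihB]
    | or A B ihA ihB => intro a x; simp only [Sat, ihA, ihB]
    | box A ih =>
      intro a x
      constructor
      · intro h y hy
        exact (ih a y).mp (h (some ⟨a, y⟩) ⟨rfl, hy⟩)
      · intro h q hq
        cases q with
        | none => exact hq.elim
        | some s =>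
          obtain ⟨b, y⟩ := s
          obtain ⟨hab, hr⟩ := hq
          cases hab
          exact (ih a y).mpr (h y hr)
    | dia A ih =>
      intro a x
      constructor
      · rintro ⟨q, hq, hC⟩
        cases q with
        | none => exact hq.elim
        | some s =>
          obtain ⟨b, y⟩ := s
          obtain ⟨hab, hr⟩ := hq
          cases hab
          exact ⟨y, hr, (ih a y).mp hC⟩
      · rintro ⟨y, hy, hC⟩
        exact ⟨some ⟨a, y⟩, ⟨rfl, hy⟩, (ih a y).mpr hC⟩
  -- premise falsity facts
  have hfA : ∀ a : Idx m, ¬ Sat (R a) (val a) a.1 (w0 a) := by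
    intro a hs
    exact hfl a ⟨a.1, by simp, hs⟩
  have hfB : ∀ (a : Idx m), ∀ B ∈ Δ₀, ¬ Sat (R a) (val a) B (w0 a) := by
    intro a B hB hs
    exact hfl a ⟨B, by simp [Multiset.mem_cons, Multiset.mem_add, hB], hs⟩
  have hfdB : ∀ (a : Idx m), ∀ B ∈ Δ₀, ¬ Sat (R a) (val a) (Fml.dia B) (w0 a) := by
    intro a B hB hs
    refine hfl a ⟨Fml.dia B, ?_, hs⟩
    simp only [Multiset.mem_cons, Multiset.mem_add]
    exact Or.inr (Or.inr (Multiset.mem_map_of_mem _ hB))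
  have hBfalse : ∀ B ∈ Δ₀, ∀ (a : Idx m) (y : W a),
      (y = w0 a ∨ R a (w0 a) y) → ¬ Sat (R a) (val a) B y := by
    rintro B hB a y (rfl | hy) hs
    · exact hfB a B hB hs
    · exact hfdB a B hB ⟨y, hy, hs⟩
  -- m is true at the root, by validity
  obtain ⟨C, hCm, hCs⟩ := hval V R' val' htrans' hwf' none
  -- but every member of m is false at the root
  cases C with
  | pos n =>
    have : val' none n = true := hCs
    simp only [val', decide_eq_true_eq] at this
    exact hlit n hCm this
  | neg n =>
    have : val' none n = false := hCs
    simp only [val', decide_eq_false_iff_not] at this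
    exact this hCm
  | top => exact htop hCm
  | bot => exact hCs
  | and A B => exact hand A B hCm
  | or A B => exact hor A B hCm
  | box A =>
    have ha : Fml.box A ∈ m := hCm
    have := hCs (some ⟨⟨A, ha⟩, w0 ⟨A, ha⟩⟩) (Or.inl rfl)
    exact hfA ⟨A, ha⟩ ((htf A ⟨A, ha⟩ (w0 ⟨A, ha⟩)).mp this)
  | dia B =>
    obtain ⟨q, hq, hBs⟩ := hCs
    cases q with
    | none => exact hq.elim
    | some s =>
      obtain ⟨a, y⟩ := s
      have hB₀ : B ∈ Δ₀ := (hΔ₀ B).mpr hCm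
      exact hBfalse B hB₀ a y hq ((htf B a y).mp hBs)

end GLReg

theorem GLInf_regular (Γ : Sequent) (h : GLInf Γ) :
    ∃ S : Set Sequent, S.Finite ∧ Γ ∈ S ∧ ∀ Δ ∈ S, InfStep S Δ := by
  classical
  open GLReg in
  obtain ⟨S₀, hΓ₀, hS₀⟩ := h
  have hvΓ : Valid Γ := sound hS₀ Γ hΓ₀
  set Cl : Finset Fml := Γ.toFinset.biUnion subf with hCl
  have hClosed : ∀ C ∈ Cl, subf C ⊆ Cl := by
    intro C hC
    rw [hCl, Finset.mem_biUnion] at hC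
    obtain ⟨D, hD, hCD⟩ := hC
    intro x hx
    rw [hCl, Finset.mem_biUnion]
    exact ⟨D, hD, subf_trans D C hCD hx⟩
  have hClmem : ∀ {s : Sequent}, s.toFinset ⊆ Cl → ∀ {C}, C ∈ s → C ∈ Cl := by
    intro s hs C hC
    exact hs (Multiset.mem_toFinset.mpr hC)
  set N : ℕ := wtm Γ + Cl.sum (fun C => 3 * wt C + 1) with hN
  set S : Set Sequent := {s | s.toFinset ⊆ Cl ∧ wtm s ≤ N ∧ Valid s} with hSdef
  have hmemS : ∀ {s : Sequent}, s ∈ S ↔ s.toFinset ⊆ Cl ∧ wtm s ≤ N ∧ Valid s := by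
    intro s; rw [hSdef]; rfl
  refine ⟨S, ?_, ?_, ?_⟩
  · -- finiteness
    have hsub : S ⊆ ↑((N • Cl.val).powerset.toFinset) := by
      intro s hs
      rcases hmemS.mp hs with ⟨h1, h2, _⟩
      simp only [Finset.coe_sort_coe, Finset.mem_coe, Multiset.mem_toFinset,
        Multiset.mem_powerset]
      rw [Multiset.le_iff_count]
      intro C
      by_cases hC : C ∈ s
      · have hCcl : C ∈ Cl.val := hClmem h1 hC
        have hcount : Multiset.count C Cl.val = 1 := by
          have h01 := Multiset.nodup_iff_count_le_one.mp Cl.nodup C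
          have h02 := Multiset.one_le_count_iff_mem.mpr hCcl
          omega
        rw [Multiset.count_nsmul, hcount, mul_one]
        calc Multiset.count C s ≤ Multiset.card s := Multiset.count_le_card C s
          _ ≤ wtm s := card_le_wtm s
          _ ≤ N := h2
      · rw [Multiset.count_eq_zero.mpr hC]
        exact Nat.zero_le _
    exact Set.Finite.subset ((N • Cl.val).powerset.toFinset).finite_toSet hsub
  · -- Γ ∈ S
    refine hmemS.mpr ⟨?_, ?_, hvΓ⟩
    · intro C hC
      rw [hCl, Finset.mem_biUnion]
      exact ⟨C, hC, mem_subf_self C⟩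
    · rw [hN]; exact Nat.le_add_right _ _
  · -- closure
    intro s hs
    rcases hmemS.mp hs with ⟨hsCl, hsN, hsval⟩
    by_cases hpair : ∃ A, A ∈ s ∧ A.negation ∈ s.erase A
    · obtain ⟨A, hA, hA'⟩ := hpair
      exact Or.inl ⟨(s.erase A).erase A.negation, A,
        by rw [Multiset.cons_erase hA', Multiset.cons_erase hA]⟩
    by_cases htop : Fml.top ∈ s
    · exact Or.inr (Or.inl ⟨s.erase Fml.top, (Multiset.cons_erase htop).symm⟩)
    by_cases handc : ∃ A B, Fml.and A B ∈ s
    · obtain ⟨A, B, hAB⟩ := handc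
      have hABCl : Fml.and A B ∈ Cl := hClmem hsCl hAB
      have hACl : A ∈ Cl := hClosed _ hABCl (by simp [subf, mem_subf_self])
      have hBCl : B ∈ Cl := hClosed _ hABCl (by simp [subf, mem_subf_self])
      have herCl : (s.erase (Fml.and A B)).toFinset ⊆ Cl := by
        intro C hC
        exact hClmem hsCl (Multiset.mem_of_mem_erase (Multiset.mem_toFinset.mp hC))
      have hwts : wtm s = wt A + wt B + 1 + wtm (s.erase (Fml.and A B)) := by
        conv_lhs => rw [← Multiset.cons_erase hAB]
        rw [wtm_cons]; simp [wt]
      have hvinv : ∀ (C : Fml), C ∈ ({A, B} : Set Fml) →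
          Valid (C ::ₘ s.erase (Fml.and A B)) := by
        rintro C hC W R val htr hwf w
        obtain ⟨D, hD, hDs⟩ := hsval W R val htr hwf w
        rw [← Multiset.cons_erase hAB, Multiset.mem_cons] at hD
        rcases hD with rfl | hD'
        · rcases hDs with ⟨hsA, hsB⟩
          rcases hC with rfl | hC
          · exact ⟨C, Multiset.mem_cons_self _ _, hsA⟩
          · rcases hC with rfl
            exact ⟨C, Multiset.mem_cons_self _ _, hsB⟩
        · exact ⟨D, Multiset.mem_cons_of_mem hD', hDs⟩
      refine Or.inr (Or.inr (Or.inl ⟨s.erase (Fml.and A B), A, B,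
        (Multiset.cons_erase hAB).symm, ?_, ?_⟩))
      · refine hmemS.mpr ⟨?_, ?_, hvinv A (by simp)⟩
        · intro C hC
          rw [Multiset.toFinset_cons, Finset.mem_insert] at hC
          rcases hC with rfl | hC
          · exact hACl
          · exact herCl hC
        · rw [wtm_cons]
          have := one_le_wt B
          omega
      · refine hmemS.mpr ⟨?_, ?_, hvinv B (by simp)⟩
        · intro C hC
          rw [Multiset.toFinset_cons, Finset.mem_insert] at hC
          rcases hC with rfl | hC
          · exact hBCl
          · exact herCl hC
        · rw [wtm_cons]
          have := one_le_wt A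
          omega
    by_cases horc : ∃ A B, Fml.or A B ∈ s
    · obtain ⟨A, B, hAB⟩ := horc
      have hABCl : Fml.or A B ∈ Cl := hClmem hsCl hAB
      have hACl : A ∈ Cl := hClosed _ hABCl (by simp [subf, mem_subf_self])
      have hBCl : B ∈ Cl := hClosed _ hABCl (by simp [subf, mem_subf_self])
      have herCl : (s.erase (Fml.or A B)).toFinset ⊆ Cl := by
        intro C hC
        exact hClmem hsCl (Multiset.mem_of_mem_erase (Multiset.mem_toFinset.mp hC))
      refine Or.inr (Or.inr (Or.inr (Or.inl ⟨s.erase (Fml.or A B), A, B,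
        (Multiset.cons_erase hAB).symm, ?_⟩)))
      refine hmemS.mpr ⟨?_, ?_, ?_⟩
      · intro C hC
        rw [Multiset.toFinset_cons, Finset.mem_insert] at hC
        rcases hC with rfl | hC
        · exact hACl
        rw [Multiset.toFinset_cons, Finset.mem_insert] at hC
        rcases hC with rfl | hC
        · exact hBCl
        · exact herCl hC
      · have hwts : wtm s = wt A + wt B + 1 + wtm (s.erase (Fml.or A B)) := by
          conv_lhs => rw [← Multiset.cons_erase hAB]
          rw [wtm_cons]; simp [wt]
        rw [wtm_cons, wtm_cons]
        omega
      · rintro W R val htr hwf w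
        obtain ⟨D, hD, hDs⟩ := hsval W R val htr hwf w
        rw [← Multiset.cons_erase hAB, Multiset.mem_cons] at hD
        rcases hD with rfl | hD'
        · rcases hDs with hsA | hsB
          · exact ⟨A, Multiset.mem_cons_self _ _, hsA⟩
          · exact ⟨B, Multiset.mem_cons_of_mem (Multiset.mem_cons_self _ _), hsB⟩
        · exact ⟨D, Multiset.mem_cons_of_mem (Multiset.mem_cons_of_mem hD'), hDs⟩
    -- box case
    push_neg at handc horc
    have hlit : ∀ n, Fml.pos n ∈ s → Fml.neg n ∉ s := by
      intro n h1 h2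
      exact hpair ⟨Fml.pos n, h1, by
        rw [Fml.negation]
        exact (Multiset.mem_erase_of_ne (by simp)).mpr h2⟩
    set F : Finset Fml := Cl.filter (fun B => Fml.dia B ∈ s) with hF
    set Δ₀ : Multiset Fml := F.val with hΔ₀def
    have hΔ₀ : ∀ B, B ∈ Δ₀ ↔ Fml.dia B ∈ s := by
      intro B
      rw [hΔ₀def, hF]
      simp only [Finset.mem_val, Finset.mem_filter]
      constructor
      · exact fun h => h.2
      · intro h
        have : Fml.dia B ∈ Cl := hClmem hsCl h
        exact ⟨hClosed _ this (by simp [subf, mem_subf_self]), h⟩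
    obtain ⟨A, hboxA, hvpre⟩ := box_complete s Δ₀ hsval htop hlit handc horc hΔ₀
    have hnd : (diaS Δ₀).Nodup := by
      refine Multiset.Nodup.map ?_ F.nodup
      intro a b hab
      injection hab
    have hd : diaS Δ₀ ≤ s.erase (Fml.box A) := by
      rw [Multiset.le_iff_count]
      intro C
      by_cases hC : C ∈ diaS Δ₀
      · have h1 : Multiset.count C (diaS Δ₀) ≤ 1 :=
          Multiset.nodup_iff_count_le_one.mp hnd C
        obtain ⟨B, hB, rfl⟩ := Multiset.mem_map.mp hC
        have h2 : Fml.dia B ∈ s.erase (Fml.box A) :=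
          (Multiset.mem_erase_of_ne (by simp)).mpr ((hΔ₀ B).mp hB)
        have h3 := Multiset.one_le_count_iff_mem.mpr h2
        omega
      · rw [Multiset.count_eq_zero.mpr hC]
        exact Nat.zero_le _
    set Θ : Sequent := s.erase (Fml.box A) - diaS Δ₀ with hΘ
    have hsplit : s = Fml.box A ::ₘ (diaS Δ₀ + Θ) := by
      rw [hΘ, add_comm, tsub_add_cancel_of_le hd, Multiset.cons_erase hboxA]
    have hACl : A ∈ Cl := by
      have : Fml.box A ∈ Cl := hClmem hsCl hboxA
      exact hClosed _ this (by simp [subf, mem_subf_self])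
    refine Or.inr (Or.inr (Or.inr (Or.inr ⟨Δ₀, Θ, A, hsplit, ?_⟩)))
    refine hmemS.mpr ⟨?_, ?_, hvpre⟩
    · intro C hC
      rw [Multiset.toFinset_cons, Finset.mem_insert] at hC
      rcases hC with rfl | hC
      · exact hACl
      rw [Multiset.toFinset_add, Finset.mem_union] at hC
      rcases hC with hC | hC
      · have hC2 : C ∈ Δ₀ := Multiset.mem_toFinset.mp hC
        rw [hΔ₀def, Finset.mem_val] at hC2
        exact Finset.filter_subset _ _ hC2
      · have := Multiset.mem_toFinset.mp hC
        obtain ⟨B, hB, rfl⟩ := Multiset.mem_map.mp this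
        exact hClmem hsCl ((hΔ₀ B).mp hB)
    · -- weight bound
      rw [wtm_cons, wtm_add]
      have e1 : wtm Δ₀ = F.sum wt := rfl
      have e2 : wtm (diaS Δ₀) = F.sum (fun B => wt B + 1) := by
        rw [hΔ₀def]
        show ((Multiset.map Fml.dia F.val).map wt).sum = _
        rw [Multiset.map_map]
        rfl
      have h1 : wt A ≤ Cl.sum wt := Finset.single_le_sum (fun i _ => Nat.zero_le _) hACl
      have h2 : F.sum wt + F.sum (fun B => wt B + 1) = F.sum (fun B => 2 * wt B + 1) := by
        rw [← Finset.sum_add_distrib]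
        apply Finset.sum_congr rfl
        intro x _
        ring
      have h3 : F.sum (fun B => 2 * wt B + 1) ≤ Cl.sum (fun B => 2 * wt B + 1) :=
        Finset.sum_le_sum_of_subset (Finset.filter_subset _ _)
      have h4 : Cl.sum wt + Cl.sum (fun B => 2 * wt B + 1)
          = Cl.sum (fun C => 3 * wt C + 1) := by
        rw [← Finset.sum_add_distrib]
        apply Finset.sum_congr rfl
        intro x _
        ring
      rw [hN]
      omega
end
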